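/- arXiv:math/0201236 — 4 statements merged into one kernel-verified Lean document; each statement's English description precedes it below -/
import Mathlib

section
/- Let Λ ⊂ Λ̃ be free abelian groups with a symmetric bilinear form on Λ̃, and suppose Λ̃ = Λ ⊕ ℤ·e where ⟨e,e⟩ = -1 and ⟨e, x⟩ = 0 for all x ∈ Λ (the blow-up of the Néron–Severi lattice). For a ∈ Λ, an integer 0 ≤ k < r, and the class ã = π*a + k·e ∈ Λ̃ (where π* is the inclusion), one has m_Λ̃(r, ã) ≤ m_Λ(r, a) + k(r-k), where m is defined by m(r,c) = r · inf { -∑_{i=1}^r Q(c/r - ν_i) : ν_i in the lattice, ∑ ν_i = c }. -/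
open scoped BigOperators

noncomputable def mval {V : Type*} [AddCommGroup V] [Module ℚ V]
    (B : V →ₗ[ℚ] V →ₗ[ℚ] ℚ) (Λ : AddSubgroup V) (r : ℕ) (a : V) : ℝ :=
  (r : ℝ) * sInf { x : ℝ | ∃ μ : Fin r → V, (∀ i, μ i ∈ Λ) ∧ (∑ i, μ i) = a ∧
      x = -∑ i, ((B ((r : ℚ)⁻¹ • a - μ i)) ((r : ℚ)⁻¹ • a - μ i) : ℝ) }

/-- The blow-up of the lattice: the form on `V × ℚ` given by
`⟨(x,s),(y,t)⟩ = ⟨x,y⟩ - s·t`, i.e. the orthogonal sum with a `(-1)`-line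
spanned by the exceptional class `e = (0,1)`. -/
noncomputable def blowupForm {V : Type*} [AddCommGroup V] [Module ℚ V]
    (B : V →ₗ[ℚ] V →ₗ[ℚ] ℚ) : (V × ℚ) →ₗ[ℚ] (V × ℚ) →ₗ[ℚ] ℚ :=
  LinearMap.mk₂ ℚ (fun p q => B p.1 q.1 - p.2 * q.2)
    (by intro p p' q; simp [map_add, LinearMap.add_apply]; ring)
    (by intro c p q; simp [map_smul, LinearMap.smul_apply, smul_eq_mul]; ring)
    (by intro p q q'; simp [map_add]; ring)
    (by intro c p q; simp [map_smul, smul_eq_mul]; ring)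

/-- The blow-up of the Néron–Severi lattice: `Λ̃ = Λ ⊕ ℤ·e` with `e = (0,1)`. -/
noncomputable def blowupLattice {V : Type*} [AddCommGroup V] [Module ℚ V]
    (Λ : AddSubgroup V) : AddSubgroup (V × ℚ) :=
  Λ.prod (AddSubgroup.zmultiples (1 : ℚ))

/-!
Given a decomposition `a = ∑ μᵢ` with `μᵢ ∈ Λ`, put the exceptional class on the first `k`
summands: `(a, k) = ∑ (μᵢ, εᵢ)` with `εᵢ ∈ {0, 1}`. Since `e` is orthogonal to `Λ` with `e² = -1`,
the exceptional coordinate adds `∑ (k/r - εᵢ)² = k(r-k)/r` to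
`-∑ Q(a/r - μᵢ)`, so every value of the infimum for `Λ`, shifted by `k(r-k)/r`, is a value of the
infimum for the blown-up lattice.
-/

theorem csInf_le_csInf_add {α : Type*} [ConditionallyCompleteLattice α] [AddGroup α]
    [AddRightMono α] {S T : Set α} (hS : S.Nonempty) (hT : BddBelow T) (c : α)
    (h : ∀ x ∈ S, x + c ∈ T) : sInf T ≤ sInf S + c :=
  sub_le_iff_le_add.1 <| le_csInf hS fun x hx => sub_le_iff_le_add.2 (csInf_le hT (h x hx))

theorem Finset.sum_sq_mean_sub {ι K : Type*} [Field K] (s : Finset ι) (x : ι → K)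
    (hs : (s.card : K) ≠ 0) :
    ∑ i ∈ s, ((∑ j ∈ s, x j) / s.card - x i) ^ 2 =
      ∑ i ∈ s, x i ^ 2 - (∑ i ∈ s, x i) ^ 2 / s.card := by
  simp only [sub_sq, Finset.sum_add_distrib, Finset.sum_sub_distrib, Finset.sum_const,
    ← Finset.mul_sum, nsmul_eq_mul]
  field_simp
  ring

section Blowup

variable {V : Type*} [AddCommGroup V] [Module ℚ V]

def mvalSet (B : V →ₗ[ℚ] V →ₗ[ℚ] ℚ) (Λ : AddSubgroup V) (r : ℕ) (a : V) : Set ℝ :=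
  { x : ℝ | ∃ μ : Fin r → V, (∀ i, μ i ∈ Λ) ∧ (∑ i, μ i) = a ∧
      x = -∑ i, ((B ((r : ℚ)⁻¹ • a - μ i)) ((r : ℚ)⁻¹ • a - μ i) : ℝ) }

theorem mval_eq (B : V →ₗ[ℚ] V →ₗ[ℚ] ℚ) (Λ : AddSubgroup V) (r : ℕ) (a : V) :
    mval B Λ r a = r * sInf (mvalSet B Λ r a) := rfl

theorem mvalSet_nonempty (B : V →ₗ[ℚ] V →ₗ[ℚ] ℚ) {Λ : AddSubgroup V} {r : ℕ} (hr : 0 < r)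
    {a : V} (ha : a ∈ Λ) : (mvalSet B Λ r a).Nonempty := by
  refine ⟨_, Pi.single ⟨0, hr⟩ a, fun i => ?_, by simp, rfl⟩
  rcases eq_or_ne i ⟨0, hr⟩ with rfl | hi
  · simpa using ha
  · simp [hi, zero_mem]

theorem bddBelow_mvalSet (B : V →ₗ[ℚ] V →ₗ[ℚ] ℚ) (hneg : ∀ x, B x x ≤ 0)
    (Λ : AddSubgroup V) (r : ℕ) (a : V) : BddBelow (mvalSet B Λ r a) := by
  refine ⟨0, ?_⟩
  rintro _ ⟨μ, -, -, rfl⟩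
  exact neg_nonneg.2 <| Finset.sum_nonpos fun i _ => by exact_mod_cast hneg _

@[simp]
theorem blowupForm_apply (B : V →ₗ[ℚ] V →ₗ[ℚ] ℚ) (p q : V × ℚ) :
    blowupForm B p q = B p.1 q.1 - p.2 * q.2 := rfl

theorem blowupForm_self_nonpos {B : V →ₗ[ℚ] V →ₗ[ℚ] ℚ} (hneg : ∀ x, B x x ≤ 0) (p : V × ℚ) :
    blowupForm B p p ≤ 0 := by
  rw [blowupForm_apply]
  nlinarith [hneg p.1, mul_self_nonneg p.2]

theorem sum_ite_val_lt_one_zero {r k : ℕ} (hk : k ≤ r) :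
    ∑ i : Fin r, (if (i : ℕ) < k then (1 : ℚ) else 0) = k := by
  rw [Finset.sum_boole, Fin.card_filter_val_lt, min_eq_right hk]

theorem sum_sq_div_sub_ite_val_lt {r k : ℕ} (hr : 0 < r) (hk : k ≤ r) :
    ∑ i : Fin r, ((k : ℚ) / r - if (i : ℕ) < k then 1 else 0) ^ 2 =
      (k * (r - k) / r : ℚ) := by
  have hsum := sum_ite_val_lt_one_zero hk
  have hr' : ((Finset.univ : Finset (Fin r)).card : ℚ) ≠ 0 := by simp [hr.ne']
  have hmean := Finset.sum_sq_mean_sub Finset.univ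
    (fun i : Fin r => if (i : ℕ) < k then (1 : ℚ) else 0) hr'
  simp only [hsum, Finset.card_univ, Fintype.card_fin] at hmean
  rw [hmean]
  simp only [ite_pow, one_pow, zero_pow two_ne_zero, hsum]
  field_simp

theorem blowupForm_smul_sub_self (B : V →ₗ[ℚ] V →ₗ[ℚ] ℚ) (t : ℚ) (a μ : V) (s ε : ℚ) :
    blowupForm B (t • (a, s) - (μ, ε)) (t • (a, s) - (μ, ε)) =
      B (t • a - μ) (t • a - μ) - (t * s - ε) ^ 2 := by
  simp [sq]

theorem add_mem_mvalSet_blowup {B : V →ₗ[ℚ] V →ₗ[ℚ] ℚ} {Λ : AddSubgroup V} {r k : ℕ}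
    (hr : 0 < r) (hk : k ≤ r) {a : V} {x : ℝ} (hx : x ∈ mvalSet B Λ r a) :
    x + k * (r - k) / r ∈ mvalSet (blowupForm B) (blowupLattice Λ) r (a, k) := by
  obtain ⟨μ, hμΛ, hμsum, rfl⟩ := hx
  set ε : Fin r → ℚ := fun i => if (i : ℕ) < k then 1 else 0 with hε
  refine ⟨fun i => (μ i, ε i), fun i => ⟨hμΛ i, ?_⟩, ?_, ?_⟩
  · by_cases hi : (i : ℕ) < k <;> simp [hε, hi]
  · simp [Prod.ext_iff, Prod.fst_sum, Prod.snd_sum, hμsum, hε, sum_ite_val_lt_one_zero hk]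
  · have hε_sq : ∑ i, ((r : ℚ)⁻¹ * k - ε i) ^ 2 = k * (r - k) / r := by
      simpa only [div_eq_inv_mul] using sum_sq_div_sub_ite_val_lt hr hk
    have hsum : ∑ i, blowupForm B ((r : ℚ)⁻¹ • (a, (k : ℚ)) - (μ i, ε i))
        ((r : ℚ)⁻¹ • (a, (k : ℚ)) - (μ i, ε i)) =
          ∑ i, B ((r : ℚ)⁻¹ • a - μ i) ((r : ℚ)⁻¹ • a - μ i) - k * (r - k) / r := by
      simp only [blowupForm_smul_sub_self, Finset.sum_sub_distrib, hε_sq]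
    beta_reduce
    rw [← Rat.cast_sum, ← Rat.cast_sum, hsum]
    push_cast
    ring

end Blowup

theorem mval_blowup_le_general {V : Type*} [AddCommGroup V] [Module ℚ V]
    (B : V →ₗ[ℚ] V →ₗ[ℚ] ℚ)
    (hneg : ∀ x, B x x ≤ 0)
    (Λ : AddSubgroup V)
    (r k : ℕ) (hk : k < r) (a : V) (ha : a ∈ Λ) :
    mval (blowupForm B) (blowupLattice Λ) r (a, (k : ℚ)) ≤
      mval B Λ r a + (k : ℝ) * ((r : ℝ) - (k : ℝ)) := by
  have hr : 0 < r := k.zero_le.trans_lt hk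
  have hinf : sInf (mvalSet (blowupForm B) (blowupLattice Λ) r (a, (k : ℚ))) ≤
      sInf (mvalSet B Λ r a) + k * (r - k) / r :=
    csInf_le_csInf_add (mvalSet_nonempty B hr ha)
      (bddBelow_mvalSet (blowupForm B) (blowupForm_self_nonpos hneg) _ _ _) _
      fun _ hx => add_mem_mvalSet_blowup hr hk.le hx
  rw [mval_eq, mval_eq]
  calc (r : ℝ) * sInf (mvalSet (blowupForm B) (blowupLattice Λ) r (a, (k : ℚ)))
      ≤ r * (sInf (mvalSet B Λ r a) + k * (r - k) / r) :=
        mul_le_mul_of_nonneg_left hinf r.cast_nonneg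
    _ = r * sInf (mvalSet B Λ r a) + k * (r - k) := by
        field_simp

/-- Blow-up inequality: `m_Λ̃(r, π*a + k·e) ≤ m_Λ(r, a) + k(r-k)` for `0 ≤ k < r`. -/
theorem mval_blowup_le {V : Type*} [AddCommGroup V] [Module ℚ V]
    (B : V →ₗ[ℚ] V →ₗ[ℚ] ℚ) (hsymm : ∀ x y, B x y = B y x)
    (hneg : ∀ x, B x x ≤ 0)
    (Λ : AddSubgroup V) (hfg : Λ.FG)
    (r k : ℕ) (hr : 0 < r) (hk : k < r) (a : V) (ha : a ∈ Λ) :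
    mval (blowupForm B) (blowupLattice Λ) r (a, (k : ℚ)) ≤
      mval B Λ r a + (k : ℝ) * ((r : ℝ) - (k : ℝ)) :=
  mval_blowup_le_general B hneg Λ r k hk a ha
end

section
/- Let Λ be a free abelian group with a negative semidefinite symmetric bilinear form. For a ∈ Λ, m(2,a) = 0 if and only if a ∈ 2Λ + ker Q, where ker Q = { x ∈ Λ : ⟨x,y⟩ = 0 for all y }. In particular, if the form is negative definite on Λ/ker and a ∉ 2Λ + ker, then m(2,a) > 0. -/
open scoped BigOperators

/-- `m(2,a) = 0` iff `a ∈ 2Λ + ker Q`, where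
`ker Q = { x ∈ Λ : ⟨x,y⟩ = 0 for all y ∈ Λ }`; in particular, if
`a ∉ 2Λ + ker Q` then `m(2,a) > 0`. -/
theorem mval_two_eq_zero_iff {V : Type*} [AddCommGroup V] [Module ℚ V]
    (B : V →ₗ[ℚ] V →ₗ[ℚ] ℚ) (hsymm : ∀ x y, B x y = B y x)
    (hneg : ∀ x, B x x ≤ 0)
    (Λ : AddSubgroup V) (hfg : Λ.FG)
    (hint : ∀ x ∈ Λ, ∀ y ∈ Λ, ∃ n : ℤ, B x y = (n : ℚ))
    (a : V) (ha : a ∈ Λ) :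
    (mval B Λ 2 a = 0 ↔
      ∃ c ∈ Λ, ∃ x ∈ Λ, (∀ y ∈ Λ, B x y = 0) ∧ a = (2 : ℤ) • c + x) ∧
    (¬ (∃ c ∈ Λ, ∃ x ∈ Λ, (∀ y ∈ Λ, B x y = 0) ∧ a = (2 : ℤ) • c + x) →
      0 < mval B Λ 2 a) := by
  classical
  -- radical lemma: Q(b)=0 ⇒ b ⊥ everything
  have rad : ∀ b, B b b = 0 → ∀ y, B b y = 0 := by
    intro b hb y
    by_contra h
    have key : ∀ t : ℚ, 2 * t * B b y + B y y ≤ 0 := by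
      intro t
      have h1 := hneg (t • b + y)
      simp only [map_add, map_smul, LinearMap.add_apply, LinearMap.smul_apply,
        smul_eq_mul, hb, hsymm y b] at h1
      nlinarith
    have h2 := key ((1 - B y y) / (2 * B b y))
    have h3 : (2:ℚ) * ((1 - B y y) / (2 * B b y)) * B b y = 1 - B y y := by
      field_simp
      try ring
    linarith
  have h2cast : ((2:ℕ) : ℚ) = (2:ℚ) := by norm_num
  set S : Set ℝ := { x : ℝ | ∃ μ : Fin 2 → V, (∀ i, μ i ∈ Λ) ∧ (∑ i, μ i) = a ∧
      x = -∑ i, ((B (((2:ℕ) : ℚ)⁻¹ • a - μ i)) (((2:ℕ) : ℚ)⁻¹ • a - μ i) : ℝ) } with hS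
  have hm : mval B Λ 2 a = 2 * sInf S := by
    unfold mval
    congr 1
    try norm_num
  -- membership characterization
  have hSmem : ∀ x : ℝ, x ∈ S ↔
      ∃ c ∈ Λ, x = -(((B (a - (2:ℚ) • c)) (a - (2:ℚ) • c) : ℚ) : ℝ) / 2 := by
    intro x
    constructor
    · rintro ⟨μ, hμ, hsum, rfl⟩
      refine ⟨μ 0, hμ 0, ?_⟩
      have h1 : μ 1 = a - μ 0 := by
        rw [Fin.sum_univ_two] at hsum
        rw [← hsum]; abel
      have hv1 : ((2:ℕ) : ℚ)⁻¹ • a - μ 1 = -(((2:ℕ) : ℚ)⁻¹ • a - μ 0) := by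
        rw [h1, h2cast]; module
      have hv0 : ((2:ℕ) : ℚ)⁻¹ • a - μ 0 = (2:ℚ)⁻¹ • (a - (2:ℚ) • μ 0) := by
        rw [h2cast]; module
      rw [Fin.sum_univ_two, hv1, hv0]
      have hB : (B (-((2:ℚ)⁻¹ • (a - (2:ℚ) • μ 0)))) (-((2:ℚ)⁻¹ • (a - (2:ℚ) • μ 0)))
          = (B ((2:ℚ)⁻¹ • (a - (2:ℚ) • μ 0))) ((2:ℚ)⁻¹ • (a - (2:ℚ) • μ 0)) := by
        simp only [map_neg, LinearMap.neg_apply, neg_neg]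
      rw [hB]
      have hB2 : (B ((2:ℚ)⁻¹ • (a - (2:ℚ) • μ 0))) ((2:ℚ)⁻¹ • (a - (2:ℚ) • μ 0))
          = (2:ℚ)⁻¹ * ((2:ℚ)⁻¹ * (B (a - (2:ℚ) • μ 0)) (a - (2:ℚ) • μ 0)) := by
        simp only [map_smul, LinearMap.smul_apply, smul_eq_mul]
      rw [hB2]
      push_cast
      ring
    · rintro ⟨c, hc, rfl⟩
      refine ⟨![c, a - c], ?_, ?_, ?_⟩
      · intro i
        fin_cases i
        · exact hc
        · exact Λ.sub_mem ha hc
      · rw [Fin.sum_univ_two]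
        show c + (a - c) = a
        abel
      · have hv0 : ((2:ℕ) : ℚ)⁻¹ • a - ![c, a - c] 0 = (2:ℚ)⁻¹ • (a - (2:ℚ) • c) := by
          show ((2:ℕ) : ℚ)⁻¹ • a - c = _
          rw [h2cast]; module
        have hv1 : ((2:ℕ) : ℚ)⁻¹ • a - ![c, a - c] 1 = -((2:ℚ)⁻¹ • (a - (2:ℚ) • c)) := by
          show ((2:ℕ) : ℚ)⁻¹ • a - (a - c) = _
          rw [h2cast]; module
        rw [Fin.sum_univ_two, hv0, hv1]
        have hB : (B (-((2:ℚ)⁻¹ • (a - (2:ℚ) • c)))) (-((2:ℚ)⁻¹ • (a - (2:ℚ) • c)))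
            = (B ((2:ℚ)⁻¹ • (a - (2:ℚ) • c))) ((2:ℚ)⁻¹ • (a - (2:ℚ) • c)) := by
          simp only [map_neg, LinearMap.neg_apply, neg_neg]
        rw [hB]
        have hB2 : (B ((2:ℚ)⁻¹ • (a - (2:ℚ) • c))) ((2:ℚ)⁻¹ • (a - (2:ℚ) • c))
            = (2:ℚ)⁻¹ * ((2:ℚ)⁻¹ * (B (a - (2:ℚ) • c)) (a - (2:ℚ) • c)) := by
          simp only [map_smul, LinearMap.smul_apply, smul_eq_mul]
        rw [hB2]
        push_cast
        ring
  -- basic facts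
  have hmemΛ : ∀ c ∈ Λ, a - (2:ℚ) • c ∈ Λ := by
    intro c hc
    rw [two_smul ℚ c]
    exact Λ.sub_mem ha (Λ.add_mem hc hc)
  have hnonneg : ∀ x ∈ S, (0:ℝ) ≤ x := by
    intro x hx
    obtain ⟨c, hc, rfl⟩ := (hSmem x).1 hx
    have h1 := hneg (a - (2:ℚ) • c)
    have h2 : (((B (a - (2:ℚ) • c)) (a - (2:ℚ) • c) : ℚ) : ℝ) ≤ 0 := by exact_mod_cast h1
    linarith
  have hne : S.Nonempty := ⟨_, (hSmem _).2 ⟨0, Λ.zero_mem, rfl⟩⟩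
  have hbdd : BddBelow S := ⟨0, fun x hx => hnonneg x hx⟩
  have h2sm : ∀ c : V, (2:ℤ) • c = (2:ℚ) • c := by
    intro c
    rw [two_smul ℤ c, two_smul ℚ c]
  -- if no decomposition exists, every element of S is ≥ 1/2
  have hhalf : ¬ (∃ c ∈ Λ, ∃ x ∈ Λ, (∀ y ∈ Λ, B x y = 0) ∧ a = (2 : ℤ) • c + x) →
      (1/2 : ℝ) ≤ sInf S := by
    intro hnot
    apply le_csInf hne
    intro x hx
    obtain ⟨c, hc, rfl⟩ := (hSmem x).1 hx
    obtain ⟨n, hn⟩ := hint _ (hmemΛ c hc) _ (hmemΛ c hc)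
    have hn0 : n ≠ 0 := by
      intro h0
      apply hnot
      refine ⟨c, hc, a - (2:ℚ) • c, hmemΛ c hc, ?_, ?_⟩
      · intro y _
        apply rad
        rw [hn, h0]; norm_num
      · rw [h2sm c]; abel
    have hle : (n : ℚ) ≤ 0 := hn ▸ hneg _
    have hn1 : n ≤ -1 := by
      have : n ≤ 0 := by exact_mod_cast hle
      omega
    rw [hn]
    have : ((n:ℚ) : ℝ) ≤ -1 := by exact_mod_cast hn1
    linarith
  -- decomposition ⇒ inf = 0
  have hinf0 : (∃ c ∈ Λ, ∃ x ∈ Λ, (∀ y ∈ Λ, B x y = 0) ∧ a = (2 : ℤ) • c + x) →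
      sInf S = 0 := by
    rintro ⟨c, hc, x, hxΛ, hxperp, hax⟩
    have hx0 : a - (2:ℚ) • c = x := by
      rw [hax, h2sm c]; abel
    have h0S : (0:ℝ) ∈ S := (hSmem 0).2 ⟨c, hc, by rw [hx0, hxperp x hxΛ]; norm_num⟩
    exact le_antisymm (csInf_le hbdd h0S) (Real.sInf_nonneg fun x hx => hnonneg x hx)
  constructor
  · constructor
    · intro h0
      by_contra hnot
      have h1 := hhalf hnot
      rw [hm] at h0
      linarith
    · intro hd
      rw [hm, hinf0 hd]; ring
  · intro hnot
    have h1 := hhalf hnot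
    rw [hm]; linarith
end

section
/- Let X be a compact complex surface and ℰ a rank r holomorphic bundle with Euler characteristic given by Riemann–Roch: χ(ℰ) = r[χ(𝒪_X) + c₁(ℰ)·c₁(X)/(2r) + (c₁(ℰ)² - Δ(ℰ))/(2r²)]. Let π : X̃ → X be a single blow-up with exceptional divisor D, and suppose c₁(ℰ) = π*c₁(π_*ℰ) + k[D] with 0 ≤ k < r, c₁(X̃) = π*c₁(X) - [D], [D]² = -1, [D]·π*α = 0, χ(𝒪_X̃) = χ(𝒪_X), and χ(ℰ) ≤ χ(π_*ℰ). Then, purely as a consequence of these numerical identities, Δ(ℰ) ≥ Δ(π_*ℰ) + k(r-k). -/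
/-- Numerical blow-up inequality: given the intersection theory of a single blow-up
(`d = [D]`, `d² = -1`, `d ⊥ π*H²(X)`, `π*` an isometry), `c₁(ℰ) = π*c₁(π_*ℰ) + k[D]`
with `0 ≤ k < r`, `c₁(X̃) = π*c₁(X) - [D]`, `χ(𝒪_X̃) = χ(𝒪_X)`, the Riemann–Roch
formulas for `χ(ℰ)` and `χ(π_*ℰ)`, and `χ(ℰ) ≤ χ(π_*ℰ)`, one has
`Δ(ℰ) ≥ Δ(π_*ℰ) + k(r-k)`. -/
theorem blowup_discriminant_inequality {H Ht : Type*} [AddCommGroup H] [AddCommGroup Ht]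
    (PX : H →ₗ[ℤ] H →ₗ[ℤ] ℤ) (Pt : Ht →ₗ[ℤ] Ht →ₗ[ℤ] ℤ)
    (hsX : ∀ x y, PX x y = PX y x) (hst : ∀ x y, Pt x y = Pt y x)
    (f : H →+ Ht) (hf : ∀ x y, Pt (f x) (f y) = PX x y)
    (d : Ht) (hd : Pt d d = -1) (hdo : ∀ x, Pt d (f x) = 0)
    (r k : ℕ) (hr : 0 < r) (hk : k < r)
    (c1F c1X : H) (c1E c1Xt : Ht) (c2E c2F χO χE χF ΔE ΔF : ℤ)
    (hc1E : c1E = f c1F + (k : ℤ) • d)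
    (hc1Xt : c1Xt = f c1X - d)
    (hΔE : ΔE = 2 * (r : ℤ) * c2E - ((r : ℤ) - 1) * Pt c1E c1E)
    (hΔF : ΔF = 2 * (r : ℤ) * c2F - ((r : ℤ) - 1) * PX c1F c1F)
    (hRRE : (χE : ℚ) = (r : ℚ) * ((χO : ℚ) + (Pt c1E c1Xt : ℚ) / (2 * (r : ℚ))
        + ((Pt c1E c1E : ℚ) - (ΔE : ℚ)) / (2 * (r : ℚ) ^ 2)))
    (hRRF : (χF : ℚ) = (r : ℚ) * ((χO : ℚ) + (PX c1F c1X : ℚ) / (2 * (r : ℚ))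
        + ((PX c1F c1F : ℚ) - (ΔF : ℚ)) / (2 * (r : ℚ) ^ 2)))
    (hle : χE ≤ χF) :
    ΔE ≥ ΔF + (k : ℤ) * ((r : ℤ) - (k : ℤ)) := by
  have h1 : Pt c1E c1E = PX c1F c1F - (k:ℤ)^2 := by
    rw [hc1E]
    simp only [map_add, map_smul, LinearMap.add_apply, LinearMap.smul_apply, smul_eq_mul,
      hf, hd]
    rw [hst (f c1F) d, hdo]
    ring
  have h2 : Pt c1E c1Xt = PX c1F c1X + (k:ℤ) := by
    rw [hc1E, hc1Xt]
    simp only [map_add, map_smul, map_sub, LinearMap.add_apply, LinearMap.smul_apply,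
      LinearMap.sub_apply, smul_eq_mul, hf, hd, hdo]
    rw [hst (f c1F) d, hdo]
    ring
  have hrQ : (0:ℚ) < (r:ℚ) := by exact_mod_cast hr
  have hne : (r:ℚ) ≠ 0 := ne_of_gt hrQ
  have hleQ : (χE:ℚ) ≤ (χF:ℚ) := by exact_mod_cast hle
  have h3 : 2 * (r:ℚ) * ((χF:ℚ) - (χE:ℚ))
      = -(k:ℚ) * (r:ℚ) + (k:ℚ)^2 + (ΔE:ℚ) - (ΔF:ℚ) := by
    rw [hRRE, hRRF, h1, h2]
    push_cast
    field_simp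
    ring
  have h4 : (0:ℚ) ≤ 2 * (r:ℚ) * ((χF:ℚ) - (χE:ℚ)) := by
    have := sub_nonneg.mpr hleQ
    positivity
  have key : (ΔF:ℚ) + (k:ℚ) * ((r:ℚ) - (k:ℚ)) ≤ (ΔE:ℚ) := by nlinarith [h3, h4]
  exact_mod_cast key
end

section
/- For integers r ≥ 1 and k with 0 ≤ k < r, the minimum of r·∑_{i=1}^r (k/r - n_i)² over integers n_1, …, n_r with ∑ n_i = k equals k(r-k), attained by taking k of the n_i equal to 1 and the rest equal to 0. -/
/-!
Expanding the square, the constraint `∑ nᵢ = k` turns `r ∑ (k/r - nᵢ)²` into `r ∑ nᵢ² - k²`.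
For an integer `n ≤ n²`, with equality exactly for `n ∈ {0, 1}`, so `∑ nᵢ² ≥ ∑ nᵢ = k` and the
defect is at least `rk - k² = k(r - k)`, with equality for any `0/1` vector summing to `k`.
-/

open Finset

theorem card_mul_sum_mean_sub_sq {ι K : Type*} [Fintype ι] [Field K] (x : ι → K)
    (hcard : (Fintype.card ι : K) ≠ 0) :
    (Fintype.card ι : K) * ∑ i, ((∑ j, x j) / Fintype.card ι - x i) ^ 2 =
      Fintype.card ι * ∑ i, x i ^ 2 - (∑ j, x j) ^ 2 := by
  have hexpand : ∀ i, ((∑ j, x j) / Fintype.card ι - x i) ^ 2 =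
      ((∑ j, x j) / Fintype.card ι) ^ 2 - 2 * ((∑ j, x j) / Fintype.card ι) * x i + x i ^ 2 :=
    fun i => by ring
  simp only [hexpand, sum_add_distrib, sum_sub_distrib, sum_const, card_univ, nsmul_eq_mul,
    ← mul_sum]
  field_simp
  ring

theorem Int.sum_le_sum_sq {ι : Type*} (s : Finset ι) (n : ι → ℤ) :
    ∑ i ∈ s, n i ≤ ∑ i ∈ s, n i ^ 2 :=
  sum_le_sum fun i _ => Int.le_self_sq (n i)

theorem Fin.sum_ite_val_lt {R : Type*} [AddCommMonoidWithOne R] {r k : ℕ} (hk : k ≤ r) :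
    ∑ i : Fin r, (if (i : ℕ) < k then (1 : R) else 0) = k := by
  rw [sum_boole, Fin.card_filter_val_lt, min_eq_right hk]

theorem min_defect_general (r k : ℕ) (hk : k < r) :
    IsLeast { x : ℚ | ∃ n : Fin r → ℤ, (∑ i, n i) = (k : ℤ) ∧
        x = (r : ℚ) * ∑ i, ((k : ℚ) / (r : ℚ) - (n i : ℚ)) ^ 2 }
      ((k : ℚ) * ((r : ℚ) - (k : ℚ))) ∧
    (r : ℚ) * ∑ i : Fin r,
        ((k : ℚ) / (r : ℚ) - (if (i : ℕ) < k then (1 : ℤ) else 0 : ℤ)) ^ 2 =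
      (k : ℚ) * ((r : ℚ) - (k : ℚ)) := by
  have hr : (Fintype.card (Fin r) : ℚ) ≠ 0 := by simp; omega
  have defect_eq : ∀ n : Fin r → ℤ, ∑ i, n i = (k : ℤ) →
      (r : ℚ) * ∑ i, ((k : ℚ) / r - n i) ^ 2 = r * ∑ i, (n i : ℚ) ^ 2 - k ^ 2 := by
    intro n hsum
    have hsumQ : ∑ i, (n i : ℚ) = k := by exact_mod_cast hsum
    simpa [hsumQ] using card_mul_sum_mean_sub_sq (fun i => (n i : ℚ)) hr
  set e : Fin r → ℤ := fun i => if (i : ℕ) < k then 1 else 0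
  have he_sum : ∑ i, (e i : ℚ) = k := by simpa [e] using Fin.sum_ite_val_lt (R := ℚ) hk.le
  have he_sq : ∑ i, (e i : ℚ) ^ 2 = k := by simpa [e] using Fin.sum_ite_val_lt (R := ℚ) hk.le
  have he_val : (r : ℚ) * ∑ i, ((k : ℚ) / r - e i) ^ 2 = k * (r - k) := by
    rw [defect_eq e (by exact_mod_cast he_sum), he_sq]
    ring
  refine ⟨⟨⟨e, by exact_mod_cast he_sum, he_val.symm⟩, ?_⟩, he_val⟩
  rintro x ⟨n, hsum, rfl⟩
  have hsq : (k : ℚ) ≤ ∑ i, (n i : ℚ) ^ 2 := by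
    exact_mod_cast hsum ▸ Int.sum_le_sum_sq univ n
  rw [defect_eq n hsum]
  nlinarith [hsq, (Nat.cast_nonneg r : (0 : ℚ) ≤ r)]

/-- For `0 ≤ k < r`, the minimum of `r·∑ᵢ (k/r - nᵢ)²` over integers `n₁,…,n_r` with
`∑ nᵢ = k` is `k(r-k)`, attained by taking `k` of the `nᵢ` equal to `1` and the rest `0`. -/
theorem min_defect (r k : ℕ) (hr : 0 < r) (hk : k < r) :
    IsLeast { x : ℚ | ∃ n : Fin r → ℤ, (∑ i, n i) = (k : ℤ) ∧
        x = (r : ℚ) * ∑ i, ((k : ℚ) / (r : ℚ) - (n i : ℚ)) ^ 2 }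
      ((k : ℚ) * ((r : ℚ) - (k : ℚ))) ∧
    (r : ℚ) * ∑ i : Fin r,
        ((k : ℚ) / (r : ℚ) - (if (i : ℕ) < k then (1 : ℤ) else 0 : ℤ)) ^ 2 =
      (k : ℚ) * ((r : ℚ) - (k : ℚ)) :=
  min_defect_general r k hk
end
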